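/- There exists a constant c > 0 such that for every such H₁ and every t ∈ ℝ, ‖u₁(·,t)‖_{L²(0,∞)} ≤ c ‖H₁‖_{L²(ℝ)}. -/

import Mathlib

open MeasureTheory Complex

/-- Fourier transform with the convention `ĥ(k) = ∫_ℝ e^{−ikτ} h(τ) dτ`. -/
noncomputable def fourierT (h : ℝ → ℂ) (k : ℝ) : ℂ :=
  ∫ τ : ℝ, Complex.exp (-(Complex.I * (k : ℂ) * (τ : ℂ))) * h τ

/-- `u₁(x,t) = ∫₀^∞ e^{−kx + ik²t} Ĥ₁(k) dk`. -/
noncomputable def uOne (H₁ : ℝ → ℂ) (x t : ℝ) : ℂ :=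
  ∫ k in Set.Ioi (0:ℝ),
    Complex.exp (-(k : ℂ) * (x : ℂ) + Complex.I * (k : ℂ) ^ 2 * (t : ℂ)) * fourierT H₁ k

/-!
Since `|e^{-kx + ik²t}| = e^{-kx}`, the modulus of `u₁(x,t)` is bounded by the Laplace transform
of `|Ĥ₁|` restricted to `(0,∞)`. The Laplace transform has norm at most `√π` on `L²(0,∞)`:
by the Schur test with weight `k^{-1/2}`, both row and column integrals of the kernel `e^{-xk}`
against this weight equal `√π x^{-1/2}` (a Gamma integral). Finally `Ĥ₁(k) = 𝓕 H₁(k/2π)` in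
Mathlib's normalisation, so Plancherel gives `‖Ĥ₁‖₂ = √(2π) ‖H₁‖₂`.
-/

open Set
open scoped ENNReal Real FourierTransform SchwartzMap

theorem ENNReal.sq_lintegral_mul_mul_le {α : Type*} [MeasurableSpace α] {μ : Measure α}
    {w f g : α → ℝ≥0∞} (hw : Measurable w) (hf : Measurable f) (hg : Measurable g) :
    (∫⁻ a, w a * (f a * g a) ∂μ) ^ 2
      ≤ (∫⁻ a, w a * f a ^ 2 ∂μ) * ∫⁻ a, w a * g a ^ 2 ∂μ := by
  have hdens (h : α → ℝ≥0∞) (hh : Measurable h) :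
      ∫⁻ a, w a * h a ∂μ = ∫⁻ a, h a ∂μ.withDensity w :=
    (lintegral_withDensity_eq_lintegral_mul μ hw hh).symm
  rw [hdens (fun a => f a * g a) (hf.mul hg), hdens (fun a => f a ^ 2) (hf.pow_const 2),
    hdens (fun a => g a ^ 2) (hg.pow_const 2)]
  have h := ENNReal.lintegral_mul_le_Lp_mul_Lq (μ.withDensity w) Real.HolderConjugate.two_two
    hf.aemeasurable hg.aemeasurable
  simp only [Pi.mul_apply, ENNReal.rpow_two] at h
  calc (∫⁻ a, f a * g a ∂μ.withDensity w) ^ 2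
      ≤ ((∫⁻ a, f a ^ 2 ∂μ.withDensity w) ^ (1 / 2 : ℝ)
          * (∫⁻ a, g a ^ 2 ∂μ.withDensity w) ^ (1 / 2 : ℝ)) ^ 2 := by gcongr
    _ = (∫⁻ a, f a ^ 2 ∂μ.withDensity w) * ∫⁻ a, g a ^ 2 ∂μ.withDensity w := by
      rw [mul_pow, ← ENNReal.rpow_natCast, ← ENNReal.rpow_natCast, ← ENNReal.rpow_mul,
        ← ENNReal.rpow_mul]
      norm_num

section Schur

variable {α β : Type*} [MeasurableSpace α] [MeasurableSpace β] {μ : Measure α} {ν : Measure β}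
  {K : α → β → ℝ≥0∞}

theorem lintegral_mul_lintegral_mul_comm [SFinite μ] [SFinite ν]
    (hK : Measurable (Function.uncurry K)) {f : α → ℝ≥0∞} {g : β → ℝ≥0∞}
    (hf : Measurable f) (hg : Measurable g) :
    ∫⁻ x, f x * ∫⁻ k, K x k * g k ∂ν ∂μ = ∫⁻ k, g k * ∫⁻ x, K x k * f x ∂μ ∂ν := by
  calc ∫⁻ x, f x * ∫⁻ k, K x k * g k ∂ν ∂μ
      = ∫⁻ x, ∫⁻ k, f x * (K x k * g k) ∂ν ∂μ :=
        lintegral_congr fun x =>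
          (lintegral_const_mul _ ((hK.comp measurable_prodMk_left).mul hg)).symm
    _ = ∫⁻ k, ∫⁻ x, f x * (K x k * g k) ∂μ ∂ν :=
        lintegral_lintegral_swap ((hf.comp measurable_fst).mul
          (hK.mul (hg.comp measurable_snd))).aemeasurable
    _ = ∫⁻ k, g k * ∫⁻ x, K x k * f x ∂μ ∂ν := by
        refine lintegral_congr fun k => ?_
        rw [← lintegral_const_mul (f := fun x => K x k * f x) _
          ((hK.comp measurable_prodMk_right).mul hf)]
        congr 1; ext x; ring

/-- The weights of this Schur test enter squared so that the Cauchy–Schwarz step needs no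
square roots. -/
theorem lintegral_sq_lintegral_mul_le_of_schur [SFinite μ] [SFinite ν]
    (hK : Measurable (Function.uncurry K)) {r : β → ℝ≥0∞} {s : α → ℝ≥0∞}
    (hr : Measurable r) (hs : Measurable s)
    (hr_ne_zero : ∀ᵐ k ∂ν, r k ≠ 0) (hr_ne_top : ∀ᵐ k ∂ν, r k ≠ ∞) {A B : ℝ≥0∞}
    (hA : ∀ᵐ x ∂μ, ∫⁻ k, K x k * r k ^ 2 ∂ν ≤ A * s x ^ 2)
    (hB : ∀ᵐ k ∂ν, ∫⁻ x, K x k * s x ^ 2 ∂μ ≤ B * r k ^ 2)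
    {ψ : β → ℝ≥0∞} (hψ : Measurable ψ) :
    ∫⁻ x, (∫⁻ k, K x k * ψ k ∂ν) ^ 2 ∂μ ≤ A * B * ∫⁻ k, ψ k ^ 2 ∂ν := by
  set φ : β → ℝ≥0∞ := fun k => ψ k / r k
  have hφ : Measurable φ := hψ.div hr
  have hψ_eq : ∀ᵐ k ∂ν, ψ k = r k * φ k := by
    filter_upwards [hr_ne_zero, hr_ne_top] with k h0 htop
    exact (ENNReal.mul_div_cancel h0 htop).symm
  have hpoint : ∀ᵐ x ∂μ,
      (∫⁻ k, K x k * ψ k ∂ν) ^ 2 ≤ A * (s x ^ 2 * ∫⁻ k, K x k * φ k ^ 2 ∂ν) := by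
    filter_upwards [hA] with x hx
    calc (∫⁻ k, K x k * ψ k ∂ν) ^ 2 = (∫⁻ k, K x k * (r k * φ k) ∂ν) ^ 2 := by
          congr 1
          exact lintegral_congr_ae (hψ_eq.mono fun k hk => by simp only [hk])
      _ ≤ (∫⁻ k, K x k * r k ^ 2 ∂ν) * ∫⁻ k, K x k * φ k ^ 2 ∂ν :=
          ENNReal.sq_lintegral_mul_mul_le (hK.comp measurable_prodMk_left) hr hφ
      _ ≤ A * (s x ^ 2 * ∫⁻ k, K x k * φ k ^ 2 ∂ν) := by
          rw [← mul_assoc]; gcongr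
  have hKφ : Measurable (Function.uncurry fun x k => K x k * φ k ^ 2) :=
    hK.mul ((hφ.comp measurable_snd).pow_const 2)
  calc ∫⁻ x, (∫⁻ k, K x k * ψ k ∂ν) ^ 2 ∂μ
      ≤ ∫⁻ x, A * (s x ^ 2 * ∫⁻ k, K x k * φ k ^ 2 ∂ν) ∂μ := lintegral_mono_ae hpoint
    _ = A * ∫⁻ k, φ k ^ 2 * ∫⁻ x, K x k * s x ^ 2 ∂μ ∂ν := by
        rw [lintegral_const_mul A (f := fun x => s x ^ 2 * ∫⁻ k, K x k * φ k ^ 2 ∂ν)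
          ((hs.pow_const 2).mul hKφ.lintegral_prod_right),
          lintegral_mul_lintegral_mul_comm hK (hs.pow_const 2) (hφ.pow_const 2)]
    _ ≤ A * ∫⁻ k, φ k ^ 2 * (B * r k ^ 2) ∂ν := by
        gcongr 1
        exact lintegral_mono_ae (hB.mono fun k hk => by gcongr)
    _ = A * B * ∫⁻ k, ψ k ^ 2 ∂ν := by
        rw [mul_assoc, ← lintegral_const_mul _ (hψ.pow_const 2)]
        congr 1
        exact lintegral_congr_ae (hψ_eq.mono fun k hk => by simp only [hk]; ring)

end Schur

theorem eLpNorm_two_le_mul_of_lintegral_sq_le {α β ε ε' : Type*} [MeasurableSpace α]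
    [MeasurableSpace β] [ENorm ε] [ENorm ε'] {μ : Measure α} {ν : Measure β}
    {f : α → ε} {g : β → ε'} {C : ℝ≥0∞}
    (h : ∫⁻ x, ‖f x‖ₑ ^ 2 ∂μ ≤ C ^ 2 * ∫⁻ y, ‖g y‖ₑ ^ 2 ∂ν) :
    eLpNorm f 2 μ ≤ C * eLpNorm g 2 ν := by
  simp only [eLpNorm_eq_lintegral_rpow_enorm_toReal two_ne_zero ENNReal.ofNat_ne_top,
    ENNReal.toReal_ofNat, ENNReal.rpow_two]
  calc (∫⁻ x, ‖f x‖ₑ ^ 2 ∂μ) ^ (1 / 2 : ℝ)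
      ≤ (C ^ 2 * ∫⁻ y, ‖g y‖ₑ ^ 2 ∂ν) ^ (1 / 2 : ℝ) := by gcongr
    _ = C * (∫⁻ y, ‖g y‖ₑ ^ 2 ∂ν) ^ (1 / 2 : ℝ) := by
      rw [ENNReal.mul_rpow_of_nonneg _ _ (by norm_num), ← ENNReal.rpow_natCast,
        ← ENNReal.rpow_mul]
      norm_num

theorem lintegral_exp_neg_mul_mul_rpow_neg_quarter_sq {x : ℝ} (hx : 0 < x) :
    ∫⁻ k in Ioi 0, ENNReal.ofReal (Real.exp (-(x * k))) * ENNReal.ofReal (k ^ (-(1 / 4) : ℝ)) ^ 2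
      = ENNReal.ofReal √π * ENNReal.ofReal (x ^ (-(1 / 4) : ℝ)) ^ 2 := by
  have hsq {y : ℝ} (hy : 0 < y) : (y ^ (-(1 / 4) : ℝ)) ^ 2 = y ^ ((1 / 2 : ℝ) - 1) := by
    rw [← Real.rpow_natCast, ← Real.rpow_mul hy.le]; norm_num
  have hint : IntegrableOn (fun k : ℝ => k ^ ((1 / 2 : ℝ) - 1) * Real.exp (-(x * k))) (Ioi 0) := by
    refine (integrableOn_rpow_mul_exp_neg_mul_rpow (s := 1 / 2 - 1) (by norm_num) one_pos
      hx).congr_fun (fun k _ => ?_) measurableSet_Ioi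
    simp only [Real.rpow_one, neg_mul]
  calc ∫⁻ k in Ioi 0, ENNReal.ofReal (Real.exp (-(x * k))) * ENNReal.ofReal (k ^ (-(1 / 4) : ℝ)) ^ 2
      = ∫⁻ k in Ioi 0, ENNReal.ofReal (k ^ ((1 / 2 : ℝ) - 1) * Real.exp (-(x * k))) := by
        refine setLIntegral_congr_fun measurableSet_Ioi fun k hk => ?_
        rw [← ENNReal.ofReal_pow (Real.rpow_nonneg hk.le _), hsq hk, mul_comm,
          ENNReal.ofReal_mul (Real.rpow_nonneg hk.le _)]
    _ = ENNReal.ofReal ((1 / x) ^ (1 / 2 : ℝ) * Real.Gamma (1 / 2)) := by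
        rw [← ofReal_integral_eq_lintegral_ofReal hint, Real.integral_rpow_mul_exp_neg_mul_Ioi
          one_half_pos hx]
        exact ae_restrict_of_forall_mem measurableSet_Ioi fun k hk =>
          mul_nonneg (Real.rpow_nonneg hk.le _) (Real.exp_pos _).le
    _ = ENNReal.ofReal √π * ENNReal.ofReal (x ^ (-(1 / 4) : ℝ)) ^ 2 := by
        rw [← ENNReal.ofReal_pow (Real.rpow_nonneg hx.le _), hsq hx, Real.Gamma_one_half_eq,
          mul_comm, ENNReal.ofReal_mul (Real.sqrt_nonneg _), one_div, Real.inv_rpow hx.le,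
          ← Real.rpow_neg hx.le]
        norm_num

noncomputable def laplaceTransform (ψ : ℝ → ℝ≥0∞) (x : ℝ) : ℝ≥0∞ :=
  ∫⁻ k in Ioi 0, ENNReal.ofReal (Real.exp (-(x * k))) * ψ k

theorem eLpNorm_laplaceTransform_le {ψ : ℝ → ℝ≥0∞} (hψ : Measurable ψ) :
    eLpNorm (laplaceTransform ψ) 2 (volume.restrict (Ioi 0))
      ≤ ENNReal.ofReal √π * eLpNorm ψ 2 (volume.restrict (Ioi 0)) := by
  set r : ℝ → ℝ≥0∞ := fun k => ENNReal.ofReal (k ^ (-(1 / 4) : ℝ))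
  have hr : Measurable r := by fun_prop
  have hK : Measurable (Function.uncurry fun x k : ℝ => ENNReal.ofReal (Real.exp (-(x * k)))) := by
    fun_prop
  have hr_ne_zero : ∀ᵐ k ∂volume.restrict (Ioi 0), r k ≠ 0 :=
    ae_restrict_of_forall_mem measurableSet_Ioi fun k hk =>
      (ENNReal.ofReal_pos.2 (Real.rpow_pos_of_pos hk _)).ne'
  have hr_ne_top : ∀ᵐ k ∂volume.restrict (Ioi 0), r k ≠ ∞ :=
    ae_of_all _ fun _ => ENNReal.ofReal_ne_top
  have hrow : ∀ᵐ x ∂volume.restrict (Ioi 0),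
      ∫⁻ k in Ioi 0, ENNReal.ofReal (Real.exp (-(x * k))) * r k ^ 2
        ≤ ENNReal.ofReal √π * r x ^ 2 :=
    ae_restrict_of_forall_mem measurableSet_Ioi fun x hx =>
      (lintegral_exp_neg_mul_mul_rpow_neg_quarter_sq hx).le
  have hcol : ∀ᵐ k ∂volume.restrict (Ioi 0),
      ∫⁻ x in Ioi 0, ENNReal.ofReal (Real.exp (-(x * k))) * r x ^ 2
        ≤ ENNReal.ofReal √π * r k ^ 2 :=
    ae_restrict_of_forall_mem measurableSet_Ioi fun k hk => by
      simp_rw [mul_comm _ k]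
      exact (lintegral_exp_neg_mul_mul_rpow_neg_quarter_sq hk).le
  refine eLpNorm_two_le_mul_of_lintegral_sq_le ?_
  simp only [enorm_eq_self]
  calc ∫⁻ x in Ioi 0, laplaceTransform ψ x ^ 2
      ≤ ENNReal.ofReal √π * ENNReal.ofReal √π * ∫⁻ k in Ioi 0, ψ k ^ 2 :=
        lintegral_sq_lintegral_mul_le_of_schur hK hr hr hr_ne_zero hr_ne_top hrow hcol hψ
    _ = ENNReal.ofReal √π ^ 2 * ∫⁻ k in Ioi 0, ψ k ^ 2 := by rw [sq]

theorem eLpNorm_comp_mul_left {ε : Type*} [TopologicalSpace ε] [ContinuousENorm ε]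
    {g : ℝ → ε} (hg : AEStronglyMeasurable g) {c : ℝ} (hc : c ≠ 0) (p : ℝ≥0∞) :
    eLpNorm (fun x => g (c * x)) p volume
      = ENNReal.ofReal |c⁻¹| ^ (1 / p).toReal * eLpNorm g p volume := by
  have hmap := Real.map_volume_mul_left hc
  have h := eLpNorm_map_measure (p := p) (g := g) (by rw [hmap]; exact hg.smul_measure _)
    (measurable_const_mul c).aemeasurable
  rw [hmap, eLpNorm_smul_measure_of_ne_zero (by simpa using hc)] at h
  exact h.symm

theorem SchwartzMap.eLpNorm_fourier_two {V H : Type*} [NormedAddCommGroup V]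
    [InnerProductSpace ℝ V] [FiniteDimensional ℝ V] [MeasurableSpace V] [BorelSpace V]
    [NormedAddCommGroup H] [InnerProductSpace ℂ H] [CompleteSpace H] (f : 𝓢(V, H)) :
    eLpNorm (𝓕 ⇑f) 2 volume = eLpNorm f 2 volume := by
  have h := SchwartzMap.norm_fourier_toL2_eq f
  rw [SchwartzMap.norm_toLp, SchwartzMap.norm_toLp] at h
  have hf_fin := (f.memLp 2).eLpNorm_ne_top
  have hFf_fin := ((𝓕 f).memLp 2).eLpNorm_ne_top
  exact (ENNReal.toReal_eq_toReal_iff' hFf_fin hf_fin).1 h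

theorem fourierT_eq_fourier (h : ℝ → ℂ) (k : ℝ) : fourierT h k = 𝓕 h ((2 * π)⁻¹ * k) := by
  rw [Real.fourier_eq', fourierT]
  congr 1
  ext τ
  rw [smul_eq_mul, real_inner_eq_re_inner, RCLike.re_to_real, RCLike.inner_apply, conj_trivial]
  congr 2
  field_simp
  push_cast
  ring

theorem continuous_fourierT (f : 𝓢(ℝ, ℂ)) : Continuous (fourierT f) := by
  simp_rw [funext (fourierT_eq_fourier f)]
  exact (𝓕 f).continuous.comp (continuous_const_mul _)

theorem eLpNorm_fourierT (f : 𝓢(ℝ, ℂ)) :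
    eLpNorm (fourierT f) 2 volume = ENNReal.ofReal √(2 * π) * eLpNorm f 2 volume := by
  simp_rw [funext (fourierT_eq_fourier f)]
  rw [eLpNorm_comp_mul_left (𝓕 f).continuous.aestronglyMeasurable (by positivity),
    SchwartzMap.eLpNorm_fourier_two, inv_inv, abs_of_pos (by positivity),
    Real.sqrt_eq_rpow, ENNReal.ofReal_rpow_of_nonneg (by positivity) (by norm_num)]
  norm_num

theorem enorm_uOne_le_laplaceTransform (h : ℝ → ℂ) (x t : ℝ) :
    ‖uOne h x t‖ₑ ≤ laplaceTransform (fun k => ‖fourierT h k‖ₑ) x := by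
  refine (enorm_integral_le_lintegral_enorm _).trans_eq
    (setLIntegral_congr_fun measurableSet_Ioi fun k _ => ?_)
  rw [enorm_mul, ← ofReal_norm, Complex.norm_exp]
  congr 3
  simp [← Complex.ofReal_pow, mul_comm]

/-- The `L² → L²` bound: for Schwartz `H₁` whose Fourier transform vanishes on `(−∞,0)`,
`‖u₁(·,t)‖_{L²(0,∞)} ≤ c ‖H₁‖_{L²(ℝ)}` for every `t ∈ ℝ`. -/
theorem uOne_L2_estimate :
    ∃ c : ℝ, 0 < c ∧ ∀ H₁ : SchwartzMap ℝ ℂ,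
      (∀ k : ℝ, k < 0 → fourierT (fun τ => H₁ τ) k = 0) →
      ∀ t : ℝ,
        eLpNorm (fun x => uOne (fun τ => H₁ τ) x t) 2 (volume.restrict (Set.Ioi (0:ℝ)))
          ≤ ENNReal.ofReal c * eLpNorm (fun τ => H₁ τ) 2 volume := by
  refine ⟨√π * √(2 * π), by positivity, fun H₁ _ t => ?_⟩
  set ψ : ℝ → ℝ≥0∞ := fun k => ‖fourierT H₁ k‖ₑ
  have hu (x : ℝ) : ‖uOne H₁ x t‖ₑ ≤ ‖laplaceTransform ψ x‖ₑ :=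
    enorm_uOne_le_laplaceTransform H₁ x t
  calc eLpNorm (fun x => uOne H₁ x t) 2 (volume.restrict (Ioi 0))
      ≤ eLpNorm (laplaceTransform ψ) 2 (volume.restrict (Ioi 0)) :=
        eLpNorm_mono_enorm hu
    _ ≤ ENNReal.ofReal √π * eLpNorm ψ 2 (volume.restrict (Ioi 0)) :=
        eLpNorm_laplaceTransform_le (continuous_fourierT H₁).enorm.measurable
    _ ≤ ENNReal.ofReal √π * eLpNorm ψ 2 volume := by
        gcongr; exact Measure.restrict_le_self
    _ = ENNReal.ofReal √π * (ENNReal.ofReal √(2 * π) * eLpNorm H₁ 2 volume) := by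
        rw [eLpNorm_enorm, eLpNorm_fourierT]
    _ = ENNReal.ofReal (√π * √(2 * π)) * eLpNorm H₁ 2 volume := by
        rw [ENNReal.ofReal_mul (Real.sqrt_nonneg _), mul_assoc]
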